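/- arXiv:2411.07894 — 5 statements merged into one kernel-verified Lean document; each statement's English description precedes it below -/
import Mathlib

section
/- Let ω, x, y, z be complex numbers with 1 + ω + ω² = 0 and x + ω·y + ω²·z = 0. Then 9·(x⁵ + y⁵ + z⁵) = 30·(x + y + z)²·x·y·z − (x + y + z)⁵. -/
/-- If `1 + ω + ω² = 0` and `x + ω·y + ω²·z = 0`, then
`9·(x⁵ + y⁵ + z⁵) = 30·(x + y + z)²·x·y·z − (x + y + z)⁵`. -/
theorem quintic_power_sum_identity
    (ω x y z : ℂ) (hω : 1 + ω + ω ^ 2 = 0)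
    (h : x + ω * y + ω ^ 2 * z = 0) :
    9 * (x ^ 5 + y ^ 5 + z ^ 5) =
      30 * (x + y + z) ^ 2 * (x * y * z) - (x + y + z) ^ 5 := by
  have key : x ^ 2 + y ^ 2 + z ^ 2 - x * y - y * z - z * x = 0 := by
    linear_combination ((y - z) ^ 2 + z * ((z - x) + ω * (y - z) + (y - z))) * hω
      - ((z - x) + ω * (y - z) + (y - z)) * h
  linear_combination (5 * (x + y + z) ^ 3
      + 5 * (x + y + z) * (x ^ 2 + y ^ 2 + z ^ 2 - x * y - y * z - z * x)
      + 15 * x * y * z) * key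
end

section
/- Let ω, a, b be complex numbers with 1 + ω + ω² = 0 and a⁵ + b⁵ = 27. Suppose x₁, x₂, x₃ ∈ ℂ satisfy x₁ + ω·x₂ + ω²·x₃ = 0, and set s = x₁ + x₂ + x₃, x₄ = (a/3)·s, x₅ = (b/3)·s. Then 3·(x₁⁵ + x₂⁵ + x₃⁵ + x₄⁵ + x₅⁵) = 10·s²·x₁·x₂·x₃. -/
/-- The key intermediate identity in van Geemen's computation: along the van Geemen
line (with `a⁵ + b⁵ = 27`), the sum of fifth powers of the coordinates satisfies
`3·(x₁⁵ + x₂⁵ + x₃⁵ + x₄⁵ + x₅⁵) = 10·s²·x₁·x₂·x₃` where `s = x₁ + x₂ + x₃`. -/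
theorem vanGeemen_fifth_power_sum
    (ω a b : ℂ) (hω : 1 + ω + ω ^ 2 = 0) (hab : a ^ 5 + b ^ 5 = 27)
    (x₁ x₂ x₃ s x₄ x₅ : ℂ)
    (h1 : x₁ + ω * x₂ + ω ^ 2 * x₃ = 0)
    (hs : s = x₁ + x₂ + x₃)
    (h4 : x₄ = a / 3 * s) (h5 : x₅ = b / 3 * s) :
    3 * (x₁ ^ 5 + x₂ ^ 5 + x₃ ^ 5 + x₄ ^ 5 + x₅ ^ 5) =
      10 * s ^ 2 * (x₁ * x₂ * x₃) := by
  subst h4 h5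
  have hω3 : ω ^ 3 = 1 := by linear_combination (ω - 1) * hω
  set w : ℂ := x₁ + ω ^ 2 * x₂ + ω * x₃ with hw
  have e1 : 3 * x₁ = s + w := by linear_combination h1 - (x₂ + x₃) * hω - hs
  have e2 : 3 * x₂ = s + ω * w := by
    linear_combination ω ^ 2 * h1 - (x₁ + ω * x₃) * hω - hs + x₃ * hω3 - (2 * x₂ + ω * x₃) * hω3
  have e3 : 3 * x₃ = s + ω ^ 2 * w := by
    linear_combination ω * h1 - (x₁ + ω * x₂ + ω ^ 2 * x₂) * hω - hs + x₂ * hω3 + ω * x₂ * hω - 2 * x₃ * hω3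
  have key : (3 * x₁) ^ 5 + (3 * x₂) ^ 5 + (3 * x₃) ^ 5 = 3 * (s ^ 5 + 10 * s ^ 2 * w ^ 3) := by
    rw [e1, e2, e3]
    linear_combination (5 * s ^ 4 * w + 10 * s ^ 3 * w ^ 2 + 5 * s * w ^ 4 + w ^ 5) * hω +
      (10 * s ^ 3 * w ^ 2 * ω + 10 * s ^ 2 * w ^ 3 * (ω ^ 3 + 2) +
        5 * s * w ^ 4 * (ω + ω ^ 2 * (ω ^ 3 + 1)) +
        w ^ 5 * (ω ^ 2 + ω * (ω ^ 6 + ω ^ 3 + 1))) * hω3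
  have hprod : (3 * x₁) * (3 * x₂) * (3 * x₃) = s ^ 3 + w ^ 3 := by
    rw [e1, e2, e3]
    linear_combination (s ^ 2 * w + s * w ^ 2) * hω + (s * w ^ 2 + w ^ 3) * hω3
  linear_combination (1 / 81 : ℂ) * key - (10 * s ^ 2 / 27) * hprod + (s ^ 5 / 81) * hab
end

section
/- Let ω, a, b be complex numbers with 1 + ω + ω² = 0 and a·b ≠ 0, and let ζ ∈ ℂ be a primitive fifth root of unity. Let G = {g ∈ (ZMod 5)⁵ : g₁ + g₂ + g₃ + g₄ + g₅ = 0} act on subsets of ℂ⁵ by (g·x)ⱼ = ζ^{gⱼ}·xⱼ. Then the stabilizer {g ∈ G : g·C(ω,a,b) = C(ω,a,b)} is exactly the diagonal subgroup {(c,c,c,c,c) : c ∈ ZMod 5}; consequently the orbit {g·C(ω,a,b) : g ∈ G} has exactly 125 elements. -/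
/-- The (affine cone over the) van Geemen line `C(ω,a,b) ⊆ ℂ⁵`. -/
def vanGeemenLine (ω a b : ℂ) : Set (Fin 5 → ℂ) :=
  {x | x 0 + ω * x 1 + ω ^ 2 * x 2 = 0 ∧
       3 * x 3 = a * (x 0 + x 1 + x 2) ∧
       3 * x 4 = b * (x 0 + x 1 + x 2)}

/-- The action of `g ∈ (ℤ/5)⁵` on subsets of `ℂ⁵` by coordinatewise scaling by powers
of a fifth root of unity `ζ`: `(g · x)ⱼ = ζ^{gⱼ} · xⱼ`. -/
def scaleBy (ζ : ℂ) (g : Fin 5 → ZMod 5) (S : Set (Fin 5 → ℂ)) : Set (Fin 5 → ℂ) :=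
  (fun x : Fin 5 → ℂ => fun j => ζ ^ (g j).val * x j) '' S

lemma vG.pow_mod5 {ζ : ℂ} (hζ : IsPrimitiveRoot ζ 5) (n : ℕ) : ζ ^ (n % 5) = ζ ^ n := by
  conv_rhs => rw [← Nat.mod_add_div n 5]
  rw [pow_add, pow_mul, hζ.pow_eq_one, one_pow, mul_one]

lemma vG.pow_val_add {ζ : ℂ} (hζ : IsPrimitiveRoot ζ 5) (x y : ZMod 5) :
    ζ ^ (x + y).val = ζ ^ x.val * ζ ^ y.val := by
  rw [ZMod.val_add, vG.pow_mod5 hζ, pow_add]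

lemma vG.scaleBy_add {ζ : ℂ} (hζ : IsPrimitiveRoot ζ 5) (g h : Fin 5 → ZMod 5)
    (S : Set (Fin 5 → ℂ)) : scaleBy ζ (g + h) S = scaleBy ζ g (scaleBy ζ h S) := by
  unfold scaleBy
  rw [Set.image_image]
  apply congrArg (· '' S)
  funext x
  funext j
  simp only [Pi.add_apply, vG.pow_val_add hζ]
  ring

lemma vG.scaleBy_zero (ζ : ℂ) (S : Set (Fin 5 → ℂ)) : scaleBy ζ 0 S = S := by
  unfold scaleBy
  have : (fun x : Fin 5 → ℂ => fun j => ζ ^ ((0 : Fin 5 → ZMod 5) j).val * x j) = id := by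
    funext x j
    simp
  rw [this, Set.image_id]

lemma vG.scaleBy_neg {ζ : ℂ} (hζ : IsPrimitiveRoot ζ 5) (g : Fin 5 → ZMod 5)
    (S : Set (Fin 5 → ℂ)) : scaleBy ζ (-g) (scaleBy ζ g S) = S := by
  rw [← vG.scaleBy_add hζ, neg_add_cancel, vG.scaleBy_zero]

lemma vG.scaleBy_const_subset (ζ ω a b : ℂ) (c : ZMod 5) :
    scaleBy ζ (fun _ => c) (vanGeemenLine ω a b) ⊆ vanGeemenLine ω a b := by
  rintro _ ⟨x, ⟨h1, h2, h3⟩, rfl⟩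
  refine ⟨?_, ?_, ?_⟩
  · linear_combination (ζ ^ c.val) * h1
  · linear_combination (ζ ^ c.val) * h2
  · linear_combination (ζ ^ c.val) * h3

lemma vG.scaleBy_const_eq {ζ : ℂ} (hζ : IsPrimitiveRoot ζ 5) (ω a b : ℂ) (c : ZMod 5) :
    scaleBy ζ (fun _ => c) (vanGeemenLine ω a b) = vanGeemenLine ω a b := by
  refine le_antisymm (vG.scaleBy_const_subset ζ ω a b c) ?_
  have key : scaleBy ζ (fun _ => c) (scaleBy ζ (fun _ => -c) (vanGeemenLine ω a b))
      = vanGeemenLine ω a b := by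
    have h : (fun _ => c : Fin 5 → ZMod 5) = -(fun _ => -c) := by funext j; simp
    rw [h, vG.scaleBy_neg hζ]
  calc vanGeemenLine ω a b
      = scaleBy ζ (fun _ => c) (scaleBy ζ (fun _ => -c) (vanGeemenLine ω a b)) := key.symm
    _ ⊆ scaleBy ζ (fun _ => c) (vanGeemenLine ω a b) :=
        Set.image_mono (vG.scaleBy_const_subset ζ ω a b (-c))

lemma vG.stab_const {ω a b ζ : ℂ} (hω : 1 + ω + ω ^ 2 = 0) (hab : a * b ≠ 0)
    (hζ : IsPrimitiveRoot ζ 5) {g : Fin 5 → ZMod 5}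
    (hg : scaleBy ζ g (vanGeemenLine ω a b) = vanGeemenLine ω a b) :
    ∃ c : ZMod 5, g = fun _ => c := by
  have ha : a ≠ 0 := fun h => hab (by rw [h, zero_mul])
  have hb : b ≠ 0 := fun h => hab (by rw [h, mul_zero])
  have hω3 : ω ^ 3 = 1 := by linear_combination (ω - 1) * hω
  have hω1 : (1 : ℂ) - ω ≠ 0 := by
    intro h
    have : ω = 1 := by linear_combination -h
    rw [this] at hω; norm_num at hω
  have hω0 : ω ≠ 0 := by
    intro h; rw [h] at hω3; norm_num at hω3
  set d : Fin 5 → ℂ := fun j => ζ ^ (g j).val with hd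
  -- first test vector
  have hv : (![3, 0, -3*ω, a*(1-ω), b*(1-ω)] : Fin 5 → ℂ) ∈ vanGeemenLine ω a b := by
    refine ⟨?_, ?_, ?_⟩ <;> simp [vanGeemenLine, Matrix.cons_val_zero, Matrix.cons_val_one]
    · linear_combination (-3 : ℂ) * hω3
    · ring
    · ring
  have hv' : (fun j => d j * (![3, 0, -3*ω, a*(1-ω), b*(1-ω)] : Fin 5 → ℂ) j)
      ∈ vanGeemenLine ω a b := hg ▸ ⟨_, hv, rfl⟩
  obtain ⟨E1, E2, E3⟩ := hv'
  simp only [Matrix.cons_val_zero, Matrix.cons_val_one, Matrix.head_cons,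
    Matrix.cons_val_two, Matrix.cons_val_three, Matrix.cons_val_four, Matrix.tail_cons] at E1 E2 E3
  have hd02 : d 0 = d 2 := by linear_combination E1 / 3 + d 2 * hω3
  have hd30 : d 3 = d 0 := by
    have h : a * ((1 - ω) * (d 3 - d 0)) = 0 := by
      linear_combination E2 / 3 + a * ω * hd02
    rcases mul_eq_zero.mp h with h' | h'
    · exact absurd h' ha
    rcases mul_eq_zero.mp h' with h'' | h''
    · exact absurd h'' hω1
    · linear_combination h''
  have hd40 : d 4 = d 0 := by
    have h : b * ((1 - ω) * (d 4 - d 0)) = 0 := by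
      linear_combination E3 / 3 + b * ω * hd02
    rcases mul_eq_zero.mp h with h' | h'
    · exact absurd h' hb
    rcases mul_eq_zero.mp h' with h'' | h''
    · exact absurd h'' hω1
    · linear_combination h''
  -- second test vector
  have hw : (![0, 3, -3*ω^2, a*(1-ω^2), b*(1-ω^2)] : Fin 5 → ℂ) ∈ vanGeemenLine ω a b := by
    refine ⟨?_, ?_, ?_⟩ <;> simp [vanGeemenLine]
    · linear_combination (-3*ω : ℂ) * hω3
    · ring
    · ring
  have hw' : (fun j => d j * (![0, 3, -3*ω^2, a*(1-ω^2), b*(1-ω^2)] : Fin 5 → ℂ) j)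
      ∈ vanGeemenLine ω a b := hg ▸ ⟨_, hw, rfl⟩
  obtain ⟨F1, _, _⟩ := hw'
  simp only [Matrix.cons_val_zero, Matrix.cons_val_one, Matrix.head_cons,
    Matrix.cons_val_two, Matrix.tail_cons] at F1
  have hd12 : d 1 = d 2 := by
    have h : ω * (d 1 - d 2) = 0 := by
      linear_combination F1 / 3 + ω * d 2 * hω3
    rcases mul_eq_zero.mp h with h' | h'
    · exact absurd h' hω0
    · linear_combination h'
  -- conclude
  have hval : ∀ j : Fin 5, d j = d 0 → g j = g 0 := by
    intro j h
    have := hζ.pow_inj (ZMod.val_lt (g j)) (ZMod.val_lt (g 0)) h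
    exact ZMod.val_injective 5 this
  refine ⟨g 0, funext fun j => ?_⟩
  fin_cases j
  · rfl
  · exact hval 1 (hd12.trans hd02.symm)
  · exact hval 2 hd02.symm
  · exact hval 3 hd30
  · exact hval 4 hd40

/-- The stabilizer of a van Geemen line in the group
`G = {g ∈ (ℤ/5)⁵ : ∑ gⱼ = 0}` (acting by fifth-root-of-unity scalings) is exactly the
diagonal subgroup; consequently the orbit of the line has exactly `125` elements. -/
theorem vanGeemenLine_stabilizer_and_orbit
    (ω a b ζ : ℂ) (hω : 1 + ω + ω ^ 2 = 0) (hab : a * b ≠ 0)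
    (hζ : IsPrimitiveRoot ζ 5) :
    ({g : Fin 5 → ZMod 5 | (∑ j, g j) = 0 ∧
        scaleBy ζ g (vanGeemenLine ω a b) = vanGeemenLine ω a b} =
      {g : Fin 5 → ZMod 5 | ∃ c : ZMod 5, g = fun _ => c}) ∧
    Set.ncard {S : Set (Fin 5 → ℂ) | ∃ g : Fin 5 → ZMod 5,
        (∑ j, g j) = 0 ∧ S = scaleBy ζ g (vanGeemenLine ω a b)} = 125 := by
  have h5 : (5 : ZMod 5) = 0 := by decide
  constructor
  · ext g
    simp only [Set.mem_setOf_eq]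
    constructor
    · rintro ⟨-, hg⟩
      exact vG.stab_const hω hab hζ hg
    · rintro ⟨c, rfl⟩
      refine ⟨?_, vG.scaleBy_const_eq hζ ω a b c⟩
      rw [Fin.sum_univ_five]
      linear_combination c * h5
  · set f : ZMod 5 × ZMod 5 × ZMod 5 → Set (Fin 5 → ℂ) := fun p =>
      scaleBy ζ ![0, p.1, p.2.1, p.2.2, -(p.1 + p.2.1 + p.2.2)] (vanGeemenLine ω a b) with hf
    have hrange : {S : Set (Fin 5 → ℂ) | ∃ g : Fin 5 → ZMod 5,
        (∑ j, g j) = 0 ∧ S = scaleBy ζ g (vanGeemenLine ω a b)} = Set.range f := by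
      ext S
      simp only [Set.mem_setOf_eq, Set.mem_range]
      constructor
      · rintro ⟨g, hsum, rfl⟩
        rw [Fin.sum_univ_five] at hsum
        have hdecomp : g = ![0, g 1 - g 0, g 2 - g 0, g 3 - g 0,
            -((g 1 - g 0) + (g 2 - g 0) + (g 3 - g 0))] + (fun _ => g 0) := by
          funext j
          fin_cases j <;> simp <;> try ring
          linear_combination hsum - g 0 * h5
        have heq : scaleBy ζ g (vanGeemenLine ω a b) = f (g 1 - g 0, g 2 - g 0, g 3 - g 0) := by
          rw [hf]
          conv_lhs => rw [hdecomp]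
          rw [vG.scaleBy_add hζ, vG.scaleBy_const_eq hζ ω a b (g 0)]
        exact ⟨(g 1 - g 0, g 2 - g 0, g 3 - g 0), heq.symm⟩
      · rintro ⟨p, rfl⟩
        refine ⟨![0, p.1, p.2.1, p.2.2, -(p.1 + p.2.1 + p.2.2)], ?_, rfl⟩
        rw [Fin.sum_univ_five]
        simp only [Matrix.cons_val_zero, Matrix.cons_val_one, Matrix.head_cons,
          Matrix.cons_val_two, Matrix.cons_val_three, Matrix.cons_val_four, Matrix.tail_cons]
        ring
    have hinj : Function.Injective f := by
      intro p q hpq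
      set gp : Fin 5 → ZMod 5 := ![0, p.1, p.2.1, p.2.2, -(p.1 + p.2.1 + p.2.2)] with hgp
      set gq : Fin 5 → ZMod 5 := ![0, q.1, q.2.1, q.2.2, -(q.1 + q.2.1 + q.2.2)] with hgq
      have hpq' : scaleBy ζ gp (vanGeemenLine ω a b) = scaleBy ζ gq (vanGeemenLine ω a b) := hpq
      have hstab : scaleBy ζ (-gq + gp) (vanGeemenLine ω a b) = vanGeemenLine ω a b := by
        rw [vG.scaleBy_add hζ, hpq', ← vG.scaleBy_add hζ, neg_add_cancel, vG.scaleBy_zero]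
      obtain ⟨c, hc⟩ := vG.stab_const hω hab hζ hstab
      have hc0 : c = 0 := by
        have h0 := congrFun hc 0
        simp only [Pi.add_apply, Pi.neg_apply, hgp, hgq, Matrix.cons_val_zero] at h0
        simpa using h0.symm
      have hgeq : gp = gq := by
        have : -gq + gp = 0 := by rw [hc, hc0]; funext j; simp
        have h' := congrArg (fun v => gq + v) this
        simpa [← add_assoc] using h'
      have e1 : p.1 = q.1 := by
        have := congrFun hgeq 1
        simpa [hgp, hgq] using this
      have e2 : p.2.1 = q.2.1 := by
        have := congrFun hgeq 2
        simpa [hgp, hgq] using this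
      have e3 : p.2.2 = q.2.2 := by
        have := congrFun hgeq 3
        simpa [hgp, hgq] using this
      exact Prod.ext e1 (Prod.ext e2 e3)
    rw [hrange, ← Set.image_univ, Set.ncard_image_of_injective _ hinj, Set.ncard_univ]
    simp [Nat.card_eq_fintype_card]
end

section
/- Let ω, a ∈ ℂ with 1 + ω + ω² = 0 and a ≠ 0, and let W = {x ∈ ℂ⁴ : x₁ + ω·x₂ + ω²·x₃ = 0, 3·x₄ = a·(x₁+x₂+x₃)} (a two-dimensional linear subspace of ℂ⁴, the cone over the van Geemen line with b = 0, viewed in ℙ³). Then the set of points of the projective space ℙ(ℂ⁴) that lie on this projective line and on the union of the four coordinate hyperplanes {x₁x₂x₃x₄ = 0} has exactly four elements, namely the classes of (ω, ω², 1, 0), (0, −3ω, 3, a(1−ω)), (−3ω², 0, 3, a(1−ω²)), and (−3ω, 3, 0, a(1−ω)). -/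
open Projectivization
open scoped LinearAlgebra.Projectivization

/-- The van Geemen line at `z = 0`, viewed as a projective line in `ℙ³`, meets the
union of the four coordinate hyperplanes in exactly the four points
`[ω : ω² : 1 : 0]`, `[0 : −3ω : 3 : a(1−ω)]`, `[−3ω² : 0 : 3 : a(1−ω²)]`, and
`[−3ω : 3 : 0 : a(1−ω)]`. -/
theorem vanGeemenLine_meets_toric_boundary_in_four_points
    (ω a : ℂ) (hω : 1 + ω + ω ^ 2 = 0) (ha : a ≠ 0) :
    ({p : ℙ ℂ (Fin 4 → ℂ) |
        (p.rep 0 + ω * p.rep 1 + ω ^ 2 * p.rep 2 = 0 ∧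
         3 * p.rep 3 = a * (p.rep 0 + p.rep 1 + p.rep 2)) ∧
        p.rep 0 * p.rep 1 * p.rep 2 * p.rep 3 = 0} =
      {Projectivization.mk ℂ ![ω, ω ^ 2, 1, 0]
          (by intro h; simpa using congrFun h 2),
       Projectivization.mk ℂ ![0, -3 * ω, 3, a * (1 - ω)]
          (by intro h; simpa using congrFun h 2),
       Projectivization.mk ℂ ![-3 * ω ^ 2, 0, 3, a * (1 - ω ^ 2)]
          (by intro h; simpa using congrFun h 2),
       Projectivization.mk ℂ ![-3 * ω, 3, 0, a * (1 - ω)]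
          (by intro h; simpa using congrFun h 1)}) ∧
    Set.ncard {p : ℙ ℂ (Fin 4 → ℂ) |
        (p.rep 0 + ω * p.rep 1 + ω ^ 2 * p.rep 2 = 0 ∧
         3 * p.rep 3 = a * (p.rep 0 + p.rep 1 + p.rep 2)) ∧
        p.rep 0 * p.rep 1 * p.rep 2 * p.rep 3 = 0} = 4 := by
  have hω0 : ω ≠ 0 := by intro h; rw [h] at hω; norm_num at hω
  have hω1 : ω ≠ 1 := by intro h; rw [h] at hω; norm_num at hω
  have hωsq1 : ω ^ 2 ≠ 1 := by
    intro h
    have hω' : ω = -2 := by linear_combination hω - h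
    rw [hω'] at h; norm_num at h
  have h1ω : (1 : ℂ) - ω ≠ 0 := sub_ne_zero.mpr (Ne.symm hω1)
  have h1ω2 : (1 : ℂ) - ω ^ 2 ≠ 0 := sub_ne_zero.mpr (Ne.symm hωsq1)
  have hsub : ω - 1 ≠ 0 := sub_ne_zero.mpr hω1
  -- generic membership lemma for `mk`
  have mem_mk : ∀ (v : Fin 4 → ℂ) (hv : v ≠ 0),
      (v 0 + ω * v 1 + ω ^ 2 * v 2 = 0) → (3 * v 3 = a * (v 0 + v 1 + v 2)) →
      (v 0 * v 1 * v 2 * v 3 = 0) →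
      (Projectivization.mk ℂ v hv) ∈ {p : ℙ ℂ (Fin 4 → ℂ) |
        (p.rep 0 + ω * p.rep 1 + ω ^ 2 * p.rep 2 = 0 ∧
         3 * p.rep 3 = a * (p.rep 0 + p.rep 1 + p.rep 2)) ∧
        p.rep 0 * p.rep 1 * p.rep 2 * p.rep 3 = 0} := by
    intro v hv h1 h2 h3
    obtain ⟨c, hc⟩ := (mk_eq_mk_iff ℂ _ _ (Projectivization.rep_nonzero _) hv).mp
      (mk_rep (Projectivization.mk ℂ v hv))
    simp only [Set.mem_setOf_eq, ← hc, Pi.smul_apply, Units.smul_def, smul_eq_mul]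
    refine ⟨⟨?_, ?_⟩, ?_⟩
    · linear_combination (c : ℂ) * h1
    · linear_combination (c : ℂ) * h2
    · linear_combination ((c : ℂ)) ^ 4 * h3
  have hset : ({p : ℙ ℂ (Fin 4 → ℂ) |
        (p.rep 0 + ω * p.rep 1 + ω ^ 2 * p.rep 2 = 0 ∧
         3 * p.rep 3 = a * (p.rep 0 + p.rep 1 + p.rep 2)) ∧
        p.rep 0 * p.rep 1 * p.rep 2 * p.rep 3 = 0} =
      {Projectivization.mk ℂ ![ω, ω ^ 2, 1, 0]
          (by intro h; simpa using congrFun h 2),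
       Projectivization.mk ℂ ![0, -3 * ω, 3, a * (1 - ω)]
          (by intro h; simpa using congrFun h 2),
       Projectivization.mk ℂ ![-3 * ω ^ 2, 0, 3, a * (1 - ω ^ 2)]
          (by intro h; simpa using congrFun h 2),
       Projectivization.mk ℂ ![-3 * ω, 3, 0, a * (1 - ω)]
          (by intro h; simpa using congrFun h 1)}) := by
    apply Set.Subset.antisymm
    · rintro p ⟨⟨h1, h2⟩, h3⟩
      have hv := p.rep_nonzero
      simp only [Set.mem_insert_iff, Set.mem_singleton_iff]
      rcases mul_eq_zero.mp h3 with h012 | h3z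
      · rcases mul_eq_zero.mp h012 with h01 | h2z
        · rcases mul_eq_zero.mp h01 with h0z | h1z
          · -- x₀ = 0 : point B
            right; left
            have hv1 : p.rep 1 = -(ω * p.rep 2) := by
              have key : ω * (p.rep 1 + ω * p.rep 2) = 0 := by
                linear_combination h1 - h0z
              have := (mul_eq_zero.mp key).resolve_left hω0
              linear_combination this
            have hv2 : p.rep 2 ≠ 0 := by
              intro h
              apply hv
              have hv1' : p.rep 1 = 0 := by rw [hv1, h]; ring
              have hv3 : p.rep 3 = 0 := by
                have : (3 : ℂ) * p.rep 3 = 0 := by rw [h2, h0z, hv1', h]; ring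
                simpa using this
              funext i; fin_cases i <;> simp [h0z, hv1', h, hv3]
            conv_lhs => rw [← mk_rep p]
            rw [mk_eq_mk_iff]
            refine ⟨Units.mk0 (p.rep 2 / 3) (by simp [hv2]), ?_⟩
            funext i
            fin_cases i <;> simp [Units.smul_def]
            · rw [h0z]
            · linear_combination -hv1
            · linear_combination (-1/3 : ℂ) * h2 - (a / 3) * h0z - (a / 3) * hv1
          · -- x₁ = 0 : point C
            right; right; left
            have hv0 : p.rep 0 = -(ω ^ 2 * p.rep 2) := by
              linear_combination h1 - ω * h1z
            have hv2 : p.rep 2 ≠ 0 := by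
              intro h
              apply hv
              have hv0' : p.rep 0 = 0 := by rw [hv0, h]; ring
              have hv3 : p.rep 3 = 0 := by
                have : (3 : ℂ) * p.rep 3 = 0 := by rw [h2, h1z, hv0', h]; ring
                simpa using this
              funext i; fin_cases i <;> simp [h1z, hv0', h, hv3]
            conv_lhs => rw [← mk_rep p]
            rw [mk_eq_mk_iff]
            refine ⟨Units.mk0 (p.rep 2 / 3) (by simp [hv2]), ?_⟩
            funext i
            fin_cases i <;> simp [Units.smul_def]
            · linear_combination -hv0
            · rw [h1z]
            · linear_combination (-1/3 : ℂ) * h2 - (a / 3) * h1z - (a / 3) * hv0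
        · -- x₂ = 0 : point D
          right; right; right
          have hv0 : p.rep 0 = -(ω * p.rep 1) := by
            linear_combination h1 - ω ^ 2 * h2z
          have hv1 : p.rep 1 ≠ 0 := by
            intro h
            apply hv
            have hv0' : p.rep 0 = 0 := by rw [hv0, h]; ring
            have hv3 : p.rep 3 = 0 := by
              have : (3 : ℂ) * p.rep 3 = 0 := by rw [h2, h2z, hv0', h]; ring
              simpa using this
            funext i; fin_cases i <;> simp [h2z, hv0', h, hv3]
          conv_lhs => rw [← mk_rep p]
          rw [mk_eq_mk_iff]
          refine ⟨Units.mk0 (p.rep 1 / 3) (by simp [hv1]), ?_⟩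
          funext i
          fin_cases i <;> simp [Units.smul_def]
          · linear_combination -hv0
          · exact h2z.symm
          · linear_combination (-1/3 : ℂ) * h2 - (a / 3) * h2z - (a / 3) * hv0
      · -- x₃ = 0 : point A
        left
        have hS : p.rep 0 + p.rep 1 + p.rep 2 = 0 := by
          have : a * (p.rep 0 + p.rep 1 + p.rep 2) = 0 := by
            rw [← h2, h3z]; ring
          exact (mul_eq_zero.mp this).resolve_left ha
        have hv1 : p.rep 1 = ω ^ 2 * p.rep 2 := by
          have key : (ω - 1) * (p.rep 1 - ω ^ 2 * p.rep 2) = 0 := by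
            linear_combination h1 - hS - (ω - 1) * p.rep 2 * hω
          have := (mul_eq_zero.mp key).resolve_left hsub
          linear_combination this
        have hv0 : p.rep 0 = ω * p.rep 2 := by
          linear_combination hS - hv1 - p.rep 2 * hω
        have hv2 : p.rep 2 ≠ 0 := by
          intro h
          apply hv
          have hv0' : p.rep 0 = 0 := by rw [hv0, h]; ring
          have hv1' : p.rep 1 = 0 := by rw [hv1, h]; ring
          funext i; fin_cases i <;> simp [hv0', hv1', h, h3z]
        conv_lhs => rw [← mk_rep p]
        rw [mk_eq_mk_iff]
        refine ⟨Units.mk0 (p.rep 2) hv2, ?_⟩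
        funext i
        fin_cases i <;> simp [Units.smul_def]
        · linear_combination -hv0
        · linear_combination -hv1
        · exact h3z.symm
    · rintro p (rfl | rfl | rfl | rfl)
      · refine mem_mk _ _ ?_ ?_ ?_
        · show ω + ω * ω ^ 2 + ω ^ 2 * 1 = 0
          linear_combination ω * hω
        · show (3 : ℂ) * 0 = a * (ω + ω ^ 2 + 1)
          linear_combination -a * hω
        · show ω * ω ^ 2 * 1 * 0 = 0
          ring
      · refine mem_mk _ _ ?_ ?_ ?_
        · show (0 : ℂ) + ω * (-3 * ω) + ω ^ 2 * 3 = 0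
          ring
        · show (3 : ℂ) * (a * (1 - ω)) = a * (0 + -3 * ω + 3)
          ring
        · show (0 : ℂ) * (-3 * ω) * 3 * (a * (1 - ω)) = 0
          ring
      · refine mem_mk _ _ ?_ ?_ ?_
        · show -3 * ω ^ 2 + ω * 0 + ω ^ 2 * 3 = 0
          ring
        · show (3 : ℂ) * (a * (1 - ω ^ 2)) = a * (-3 * ω ^ 2 + 0 + 3)
          ring
        · show -3 * ω ^ 2 * 0 * 3 * (a * (1 - ω ^ 2)) = 0
          ring
      · refine mem_mk _ _ ?_ ?_ ?_
        · show -3 * ω + ω * 3 + ω ^ 2 * 0 = 0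
          ring
        · show (3 : ℂ) * (a * (1 - ω)) = a * (-3 * ω + 3 + 0)
          ring
        · show -3 * ω * 3 * 0 * (a * (1 - ω)) = 0
          ring
  refine ⟨hset, ?_⟩
  rw [hset]
  -- distinctness
  have ha1ω : a * (1 - ω) ≠ 0 := mul_ne_zero ha h1ω
  have ha1ω2 : a * (1 - ω ^ 2) ≠ 0 := mul_ne_zero ha h1ω2
  have hAB : Projectivization.mk ℂ ![ω, ω ^ 2, 1, 0]
        (by intro h; simpa using congrFun h 2) ≠
      Projectivization.mk ℂ ![0, -3 * ω, 3, a * (1 - ω)]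
        (by intro h; simpa using congrFun h 2) := by
    intro hEq
    obtain ⟨c, hc⟩ := (mk_eq_mk_iff ℂ _ _ _ _).mp hEq
    have := congrFun hc 3
    simp only [Pi.smul_apply, Units.smul_def, smul_eq_mul, Matrix.cons_val_three,
      Matrix.tail_cons, Matrix.head_cons, Matrix.cons_val_zero] at this
    exact (mul_ne_zero c.ne_zero ha1ω) this
  have hAC : Projectivization.mk ℂ ![ω, ω ^ 2, 1, 0]
        (by intro h; simpa using congrFun h 2) ≠
      Projectivization.mk ℂ ![-3 * ω ^ 2, 0, 3, a * (1 - ω ^ 2)]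
        (by intro h; simpa using congrFun h 2) := by
    intro hEq
    obtain ⟨c, hc⟩ := (mk_eq_mk_iff ℂ _ _ _ _).mp hEq
    have := congrFun hc 3
    simp only [Pi.smul_apply, Units.smul_def, smul_eq_mul, Matrix.cons_val_three,
      Matrix.tail_cons, Matrix.head_cons, Matrix.cons_val_zero] at this
    exact (mul_ne_zero c.ne_zero ha1ω2) this
  have hAD : Projectivization.mk ℂ ![ω, ω ^ 2, 1, 0]
        (by intro h; simpa using congrFun h 2) ≠
      Projectivization.mk ℂ ![-3 * ω, 3, 0, a * (1 - ω)]
        (by intro h; simpa using congrFun h 1) := by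
    intro hEq
    obtain ⟨c, hc⟩ := (mk_eq_mk_iff ℂ _ _ _ _).mp hEq
    have := congrFun hc 3
    simp only [Pi.smul_apply, Units.smul_def, smul_eq_mul, Matrix.cons_val_three,
      Matrix.tail_cons, Matrix.head_cons, Matrix.cons_val_zero] at this
    exact (mul_ne_zero c.ne_zero ha1ω) this
  have hBC : Projectivization.mk ℂ ![0, -3 * ω, 3, a * (1 - ω)]
        (by intro h; simpa using congrFun h 2) ≠
      Projectivization.mk ℂ ![-3 * ω ^ 2, 0, 3, a * (1 - ω ^ 2)]
        (by intro h; simpa using congrFun h 2) := by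
    intro hEq
    obtain ⟨c, hc⟩ := (mk_eq_mk_iff ℂ _ _ _ _).mp hEq
    have := congrFun hc 0
    simp only [Pi.smul_apply, Units.smul_def, smul_eq_mul, Matrix.cons_val_zero] at this
    have hne : (c : ℂ) * (-3 * ω ^ 2) ≠ 0 := by
      apply mul_ne_zero c.ne_zero
      simp [pow_eq_zero_iff, hω0]
    exact hne this
  have hBD : Projectivization.mk ℂ ![0, -3 * ω, 3, a * (1 - ω)]
        (by intro h; simpa using congrFun h 2) ≠
      Projectivization.mk ℂ ![-3 * ω, 3, 0, a * (1 - ω)]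
        (by intro h; simpa using congrFun h 1) := by
    intro hEq
    obtain ⟨c, hc⟩ := (mk_eq_mk_iff ℂ _ _ _ _).mp hEq
    have := congrFun hc 0
    simp only [Pi.smul_apply, Units.smul_def, smul_eq_mul, Matrix.cons_val_zero] at this
    have hne : (c : ℂ) * (-3 * ω) ≠ 0 := by
      apply mul_ne_zero c.ne_zero
      simp [hω0]
    exact hne this
  have hCD : Projectivization.mk ℂ ![-3 * ω ^ 2, 0, 3, a * (1 - ω ^ 2)]
        (by intro h; simpa using congrFun h 2) ≠
      Projectivization.mk ℂ ![-3 * ω, 3, 0, a * (1 - ω)]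
        (by intro h; simpa using congrFun h 1) := by
    intro hEq
    obtain ⟨c, hc⟩ := (mk_eq_mk_iff ℂ _ _ _ _).mp hEq
    have := congrFun hc 1
    simp only [Pi.smul_apply, Units.smul_def, smul_eq_mul, Matrix.cons_val_one,
      Matrix.head_cons] at this
    have hne : (c : ℂ) * 3 ≠ 0 := by
      apply mul_ne_zero c.ne_zero; norm_num
    exact hne this
  have hnmA : Projectivization.mk ℂ ![ω, ω ^ 2, 1, 0]
      (by intro h; simpa using congrFun h 2) ∉
      ({Projectivization.mk ℂ ![0, -3 * ω, 3, a * (1 - ω)]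
          (by intro h; simpa using congrFun h 2),
        Projectivization.mk ℂ ![-3 * ω ^ 2, 0, 3, a * (1 - ω ^ 2)]
          (by intro h; simpa using congrFun h 2),
        Projectivization.mk ℂ ![-3 * ω, 3, 0, a * (1 - ω)]
          (by intro h; simpa using congrFun h 1)} : Set (ℙ ℂ (Fin 4 → ℂ))) := by
    intro hmem
    simp only [Set.mem_insert_iff, Set.mem_singleton_iff] at hmem
    rcases hmem with h | h | h
    exacts [hAB h, hAC h, hAD h]
  have hnmB : Projectivization.mk ℂ ![0, -3 * ω, 3, a * (1 - ω)]
      (by intro h; simpa using congrFun h 2) ∉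
      ({Projectivization.mk ℂ ![-3 * ω ^ 2, 0, 3, a * (1 - ω ^ 2)]
          (by intro h; simpa using congrFun h 2),
        Projectivization.mk ℂ ![-3 * ω, 3, 0, a * (1 - ω)]
          (by intro h; simpa using congrFun h 1)} : Set (ℙ ℂ (Fin 4 → ℂ))) := by
    intro hmem
    simp only [Set.mem_insert_iff, Set.mem_singleton_iff] at hmem
    rcases hmem with h | h
    exacts [hBC h, hBD h]
  rw [Set.ncard_insert_of_notMem hnmA, Set.ncard_insert_of_notMem hnmB,
    Set.ncard_pair hCD]
end

section
/- Let μ₀, μ₁, μ₂, μ₃, μ₄, λ₀, λ₁, λ₂, λ₃, λ₄ be nonzero complex numbers satisfying λ₀ = (μ₁·μ₄)⁻¹, λ₁ = μ₀⁻¹·μ₂, λ₂ = μ₁·μ₃⁻¹, λ₃ = μ₂⁻¹·μ₄, λ₄ = μ₀⁻¹·μ₃, together with 1 + μ₁⁵ = λ₁⁻⁵, λ₃⁵ = 1 + μ₃⁻⁵, and μ₄⁵·(1 + λ₄⁵) = 1. Then (μ₀⁵ − λ₀⁻⁵)·(λ₄¹⁰ + λ₄⁵) = −1. In particular, for fixed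 values of μ₀ and λ₀ with μ₀⁵ ≠ λ₀⁻⁵, the quantity λ₄⁵ satisfies a quadratic equation and takes at most two values. -/
/-! Writing `xᵢ = μᵢ⁵`, the hypotheses become three polynomial relations in `x₀, …, x₄`, and
the relation follows by eliminating `x₂` and `x₄`: together they force `x₁x₃ = x₀ + x₀x₃ + x₃²`,
and `λ₄⁵ = x₃ / x₀`, `λ₀⁻⁵ = x₁x₄`. A quadratic has at most two roots because a second root is
determined by the first through Vieta's formula `y₁ + y₂ = -b / a`. -/

theorem unobstructed_quadratic_relation {K : Type*} [Field K] {x₀ x₁ x₂ x₃ x₄ : K}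
    (hx₀ : x₀ ≠ 0) (e1 : (1 + x₁) * x₂ = x₀) (e3 : x₄ * x₃ = x₂ * (x₃ + 1))
    (e4 : x₄ * (x₀ + x₃) = x₀) :
    (x₀ - x₁ * x₄) * ((x₃ / x₀) ^ 2 + x₃ / x₀) = -1 := by
  have hcleared : (x₀ - x₁ * x₄) * x₃ * (x₃ + x₀) + x₀ ^ 2 = 0 := by
    linear_combination x₃ * e4 - (x₀ + x₃) * (x₃ + 1) * e1 - (1 + x₁) * (x₀ + x₃) * e3
  field_simp
  linear_combination hcleared

theorem exists_eq_or_eq_of_quadratic_eq_zero {K : Type*} [Field K] {a b c : K} (ha : a ≠ 0) :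
    ∃ y₁ y₂ : K, ∀ y, a * y ^ 2 + b * y + c = 0 → y = y₁ ∨ y = y₂ := by
  by_cases hroot : ∃ y₁, a * y₁ ^ 2 + b * y₁ + c = 0
  · obtain ⟨y₁, hy₁⟩ := hroot
    refine ⟨y₁, -b / a - y₁, fun y hy => ?_⟩
    have hfactor : (y - y₁) * (a * (y + y₁) + b) = 0 := by linear_combination hy - hy₁
    rcases mul_eq_zero.mp hfactor with h | h
    · exact Or.inl (sub_eq_zero.mp h)
    · right
      field_simp
      linear_combination h
  · exact ⟨0, 0, fun y hy => absurd ⟨y, hy⟩ hroot⟩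

theorem holonomy_quadratic_relation_general
    (μ₀ μ₁ μ₂ μ₃ μ₄ l₀ l₁ l₃ l₄ : ℂ)
    (hμ₀ : μ₀ ≠ 0) (hμ₂ : μ₂ ≠ 0) (hμ₃ : μ₃ ≠ 0)
    (h0 : l₀ = (μ₁ * μ₄)⁻¹) (h1 : l₁ = μ₀⁻¹ * μ₂)
    (h3 : l₃ = μ₂⁻¹ * μ₄) (h4 : l₄ = μ₀⁻¹ * μ₃)
    (e1 : 1 + μ₁ ^ 5 = l₁⁻¹ ^ 5) (e3 : l₃ ^ 5 = 1 + μ₃⁻¹ ^ 5)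
    (e4 : μ₄ ^ 5 * (1 + l₄ ^ 5) = 1) :
    (μ₀ ^ 5 - l₀⁻¹ ^ 5) * (l₄ ^ 10 + l₄ ^ 5) = -1 ∧
    (μ₀ ^ 5 ≠ l₀⁻¹ ^ 5 → ∃ y₁ y₂ : ℂ, ∀ y : ℂ,
      (μ₀ ^ 5 - l₀⁻¹ ^ 5) * (y ^ 2 + y) = -1 → y = y₁ ∨ y = y₂) := by
  refine ⟨?_, fun hq => ?_⟩
  · subst h0 h1 h3 h4
    have e1' : (1 + μ₁ ^ 5) * μ₂ ^ 5 = μ₀ ^ 5 := by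
      rw [e1]; field_simp
    have e3' : μ₄ ^ 5 * μ₃ ^ 5 = μ₂ ^ 5 * (μ₃ ^ 5 + 1) := by
      field_simp at e3; linear_combination e3
    have e4' : μ₄ ^ 5 * (μ₀ ^ 5 + μ₃ ^ 5) = μ₀ ^ 5 := by
      field_simp at e4; linear_combination e4
    have hrel := unobstructed_quadratic_relation (pow_ne_zero 5 hμ₀) e1' e3' e4'
    rw [inv_inv]
    convert hrel using 2 <;> ring
  · obtain ⟨y₁, y₂, hroots⟩ :=
      exists_eq_or_eq_of_quadratic_eq_zero (b := μ₀ ^ 5 - l₀⁻¹ ^ 5) (c := 1) (sub_ne_zero.mpr hq)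
    exact ⟨y₁, y₂, fun y hy => hroots y (by linear_combination hy)⟩

/-- The algebraic relation showing that the space of unobstructed local systems is
one-dimensional: the exponentiated homology relations together with the
unobstructedness equations `1 + μ₁⁵ = λ₁⁻⁵`, `λ₃⁵ = 1 + μ₃⁻⁵`, and
`μ₄⁵·(1 + λ₄⁵) = 1` imply `(μ₀⁵ − λ₀⁻⁵)·(λ₄¹⁰ + λ₄⁵) = −1`; in particular, when
`μ₀⁵ ≠ λ₀⁻⁵`, the quantity `λ₄⁵` satisfies a quadratic equation and takes at most
two values. -/
theorem holonomy_quadratic_relation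
    (μ₀ μ₁ μ₂ μ₃ μ₄ l₀ l₁ l₂ l₃ l₄ : ℂ)
    (hμ₀ : μ₀ ≠ 0) (hμ₁ : μ₁ ≠ 0) (hμ₂ : μ₂ ≠ 0) (hμ₃ : μ₃ ≠ 0) (hμ₄ : μ₄ ≠ 0)
    (hl₀ : l₀ ≠ 0) (hl₁ : l₁ ≠ 0) (hl₂ : l₂ ≠ 0) (hl₃ : l₃ ≠ 0) (hl₄ : l₄ ≠ 0)
    (h0 : l₀ = (μ₁ * μ₄)⁻¹) (h1 : l₁ = μ₀⁻¹ * μ₂) (h2 : l₂ = μ₁ * μ₃⁻¹)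
    (h3 : l₃ = μ₂⁻¹ * μ₄) (h4 : l₄ = μ₀⁻¹ * μ₃)
    (e1 : 1 + μ₁ ^ 5 = l₁⁻¹ ^ 5) (e3 : l₃ ^ 5 = 1 + μ₃⁻¹ ^ 5)
    (e4 : μ₄ ^ 5 * (1 + l₄ ^ 5) = 1) :
    (μ₀ ^ 5 - l₀⁻¹ ^ 5) * (l₄ ^ 10 + l₄ ^ 5) = -1 ∧
    (μ₀ ^ 5 ≠ l₀⁻¹ ^ 5 → ∃ y₁ y₂ : ℂ, ∀ y : ℂ,
      (μ₀ ^ 5 - l₀⁻¹ ^ 5) * (y ^ 2 + y) = -1 → y = y₁ ∨ y = y₂) :=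
  holonomy_quadratic_relation_general μ₀ μ₁ μ₂ μ₃ μ₄ l₀ l₁ l₃ l₄ hμ₀ hμ₂ hμ₃ h0 h1 h3 h4 e1 e3 e4
end
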